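/- arXiv:2011.12677 — 4 statements merged into one kernel-verified Lean document; each statement's English description precedes it below -/
import Mathlib

section
/- Let B₁, B₂ be d×d matrices with B₁B₂ = 0 = B₂B₁ and let M, R be the associated 2d×2d block matrices. If I + M² and I + R² are invertible, then (B₁ B₂)·(I + M²)⁻¹ = (B₁ B₂)·(I + R²)⁻¹. -/
/-!
The block structure and `B₁ B₂ = B₂ B₁ = 0` give `M² = M R`, `R M = R²` and
`(B₁ B₂) M = (B₁ B₂) R`. The first two make `1 - M R (1 + R²)⁻¹` a right inverse of
`1 + M²`, and the third turns `(B₁ B₂) (1 - M R (1 + R²)⁻¹)` into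
`(B₁ B₂) (1 - R² (1 + R²)⁻¹) = (B₁ B₂) (1 + R²)⁻¹`.
-/

open Matrix

namespace Matrix

section Blocks

variable {n α : Type*} [Fintype n] [CommSemiring α] {B₁ B₂ : Matrix n n α}
  (a b c e : α)

theorem fromCols_mul_fromBlocks_smul_eq_mul_diagonal_part
    (hB : B₁ * B₂ = 0) (hB' : B₂ * B₁ = 0) :
    fromCols B₁ B₂ * fromBlocks (a • B₁) (b • B₂) (c • B₁) (e • B₂) =
      fromCols B₁ B₂ * fromBlocks (a • B₁) 0 0 (e • B₂) := by
  simp only [fromCols_mul_fromBlocks, Matrix.mul_smul, hB, hB', smul_zero, add_zero, zero_add,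
    Matrix.mul_zero]

theorem fromBlocks_smul_mul_self_eq_mul_diagonal_part
    (hB : B₁ * B₂ = 0) (hB' : B₂ * B₁ = 0) :
    fromBlocks (a • B₁) (b • B₂) (c • B₁) (e • B₂) *
        fromBlocks (a • B₁) (b • B₂) (c • B₁) (e • B₂) =
      fromBlocks (a • B₁) (b • B₂) (c • B₁) (e • B₂) *
        fromBlocks (a • B₁) 0 0 (e • B₂) := by
  simp only [fromBlocks_multiply, Matrix.mul_smul, Matrix.smul_mul, hB, hB', smul_zero, add_zero,
    zero_add, Matrix.mul_zero]

theorem fromBlocks_diagonal_part_mul_eq_mul_self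
    (hB : B₁ * B₂ = 0) (hB' : B₂ * B₁ = 0) :
    fromBlocks (a • B₁) 0 0 (e • B₂) *
        fromBlocks (a • B₁) (b • B₂) (c • B₁) (e • B₂) =
      fromBlocks (a • B₁) 0 0 (e • B₂) * fromBlocks (a • B₁) 0 0 (e • B₂) := by
  simp only [fromBlocks_multiply, Matrix.mul_smul, Matrix.smul_mul, hB, hB', smul_zero, add_zero,
    zero_add, Matrix.mul_zero, Matrix.zero_mul]

end Blocks

section Inverse

variable {m n α : Type*} [Fintype n] [DecidableEq n] [CommRing α] {M R : Matrix n n α}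

theorem one_add_sq_mul_one_sub_eq_one {v : Matrix n n α} (hMM : M * M = M * R)
    (hRM : R * M = R * R) (hv : (1 + R ^ 2) * v = 1) :
    (1 + M ^ 2) * (1 - M * R * v) = 1 := by
  have hMMR : M ^ 2 * (M * R) = M * R * R ^ 2 := by
    calc M ^ 2 * (M * R) = M * R * (M * R) := by rw [sq, hMM]
      _ = M * (R * M) * R := by noncomm_ring
      _ = M * R * R ^ 2 := by rw [hRM]; noncomm_ring
  calc (1 + M ^ 2) * (1 - M * R * v)
      = 1 + M ^ 2 - (M * R + M ^ 2 * (M * R)) * v := by noncomm_ring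
    _ = 1 + M ^ 2 - M * R * ((1 + R ^ 2) * v) := by rw [hMMR]; noncomm_ring
    _ = 1 := by rw [hv, Matrix.mul_one, sq, hMM, add_sub_cancel_right]

theorem inv_one_add_sq_eq (hMM : M * M = M * R) (hRM : R * M = R * R)
    (hR : IsUnit (1 + R ^ 2)) :
    (1 + M ^ 2)⁻¹ = 1 - M * R * (1 + R ^ 2)⁻¹ :=
  inv_eq_right_inv <| one_add_sq_mul_one_sub_eq_one hMM hRM <|
    mul_nonsing_inv _ ((isUnit_iff_isUnit_det _).mp hR)

theorem mul_one_sub_mul_eq_mul {C : Matrix m n α} {v : Matrix n n α} (hCM : C * M = C * R)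
    (hv : (1 + R ^ 2) * v = 1) :
    C * (1 - M * R * v) = C * v := by
  calc C * (1 - M * R * v) = C - C * M * R * v := by
        simp only [Matrix.mul_sub, Matrix.mul_one, Matrix.mul_assoc]
    _ = C * ((1 + R ^ 2) * v) - C * R ^ 2 * v := by
        rw [hCM, hv, Matrix.mul_one, sq, Matrix.mul_assoc C R R]
    _ = C * v := by
        rw [Matrix.add_mul, Matrix.one_mul, Matrix.mul_add, ← Matrix.mul_assoc C (R ^ 2) v,
          add_sub_cancel_right]

theorem mul_inv_one_add_sq_eq {C : Matrix m n α} (hCM : C * M = C * R) (hMM : M * M = M * R)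
    (hRM : R * M = R * R) (hR : IsUnit (1 + R ^ 2)) :
    C * (1 + M ^ 2)⁻¹ = C * (1 + R ^ 2)⁻¹ := by
  rw [inv_one_add_sq_eq hMM hRM hR,
    mul_one_sub_mul_eq_mul hCM (mul_nonsing_inv _ ((isUnit_iff_isUnit_det _).mp hR))]

end Inverse

end Matrix

theorem stmt_8_general {d : ℕ} (B₁ B₂ : Matrix (Fin d) (Fin d) ℝ)
    (hB : B₁ * B₂ = 0) (hB' : B₂ * B₁ = 0)
    (k₁ k₂ ℓ₁ ℓ₂ : ℝ)
    (M R : Matrix (Fin d ⊕ Fin d) (Fin d ⊕ Fin d) ℝ)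
    (hM : M = fromBlocks ((ℓ₁/(2*k₁)) • B₁) ((ℓ₁/(k₁+k₂)) • B₂)
                          ((ℓ₂/(k₁+k₂)) • B₁) ((ℓ₂/(2*k₂)) • B₂))
    (hR : R = fromBlocks ((ℓ₁/(2*k₁)) • B₁) 0 0 ((ℓ₂/(2*k₂)) • B₂))
    (hRu : IsUnit (1 + R ^ 2)) :
    fromCols B₁ B₂ * (1 + M ^ 2)⁻¹ = fromCols B₁ B₂ * (1 + R ^ 2)⁻¹ := by
  subst hM hR
  exact mul_inv_one_add_sq_eq
    (fromCols_mul_fromBlocks_smul_eq_mul_diagonal_part _ _ _ _ hB hB')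
    (fromBlocks_smul_mul_self_eq_mul_diagonal_part _ _ _ _ hB hB')
    (fromBlocks_diagonal_part_mul_eq_mul_self _ _ _ _ hB hB') hRu

theorem stmt_8 {d : ℕ} (B₁ B₂ : Matrix (Fin d) (Fin d) ℝ)
    (hB : B₁ * B₂ = 0) (hB' : B₂ * B₁ = 0)
    (k₁ k₂ ℓ₁ ℓ₂ : ℝ) (hk₁ : k₁ ≠ 0) (hk₂ : k₂ ≠ 0) (hk : k₁ + k₂ ≠ 0)
    (M R : Matrix (Fin d ⊕ Fin d) (Fin d ⊕ Fin d) ℝ)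
    (hM : M = fromBlocks ((ℓ₁/(2*k₁)) • B₁) ((ℓ₁/(k₁+k₂)) • B₂)
                          ((ℓ₂/(k₁+k₂)) • B₁) ((ℓ₂/(2*k₂)) • B₂))
    (hR : R = fromBlocks ((ℓ₁/(2*k₁)) • B₁) 0 0 ((ℓ₂/(2*k₂)) • B₂))
    (hMu : IsUnit (1 + M ^ 2)) (hRu : IsUnit (1 + R ^ 2)) :
    fromCols B₁ B₂ * (1 + M ^ 2)⁻¹ = fromCols B₁ B₂ * (1 + R ^ 2)⁻¹ :=
  stmt_8_general B₁ B₂ hB hB' k₁ k₂ ℓ₁ ℓ₂ M R hM hR hRu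
end

section
/- Let B₁, B₂ be d×d matrices with B₁B₂ = 0 = B₂B₁, k₁, k₂ nonzero scalars with k₁+k₂ ≠ 0, and ℓ₁, ℓ₂ scalars such that the relevant matrices are invertible. Define V = (B₁ B₂)·(I₂d + M²)⁻¹·col(ℓ₁I_d, ℓ₂I_d) with M = [[ℓ₁B₁/(2k₁), ℓ₁B₂/(k₁+k₂)],[ℓ₂B₁/(k₁+k₂), ℓ₂B₂/(2k₂)]]. Then V = ℓ₁B₁(I_d + ℓ₁²B₁²/(2k₁)²)⁻¹ + ℓ₂B₂(I_d + ℓ₂²B₂²/(2k₂)²)⁻¹, i.e. V is the linear superposition of the two one-soliton matrices. -/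
/-!
Because `B₁ * B₂ = 0 = B₂ * B₁`, right multiplication by `M` sends a block row `(F₁ F₂)` with
`F₁ * B₂ = 0 = F₂ * B₁` to `(F₁ * (a • B₁)  F₂ * (e • B₂))`: the coupling blocks, which carry
`k₁ + k₂`, are annihilated. Applied to `F_i = B_i * (1 + a_i² • B_i²)⁻¹` this gives
`(F₁ F₂) * (1 + M²) = (B₁ B₂)`, so the block row `(B₁ B₂) * (1 + M²)⁻¹` decouples into the two
one-soliton matrices.
-/

open Matrix

section CoupledBlocks

variable {R m n : Type*} [CommRing R] [Fintype n]
  {B₁ B₂ : Matrix n n R} {a b c e : R}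

theorem fromCols_mul_fromBlocks_smul_of_mul_eq_zero {F₁ F₂ : Matrix m n R}
    (hF₁ : F₁ * B₂ = 0) (hF₂ : F₂ * B₁ = 0) :
    fromCols F₁ F₂ * fromBlocks (a • B₁) (b • B₂) (c • B₁) (e • B₂) =
      fromCols (F₁ * (a • B₁)) (F₂ * (e • B₂)) := by
  simp only [fromCols_mul_fromBlocks, Matrix.mul_smul, hF₁, hF₂, smul_zero, add_zero, zero_add]

variable (hB : B₁ * B₂ = 0) (hB' : B₂ * B₁ = 0)
include hB hB'

theorem fromCols_mul_one_add_fromBlocks_smul_sq_of_mul_eq_zero [DecidableEq n]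
    {F₁ F₂ : Matrix m n R}
    (hF₁ : F₁ * B₂ = 0) (hF₂ : F₂ * B₁ = 0) :
    fromCols F₁ F₂ * (1 + fromBlocks (a • B₁) (b • B₂) (c • B₁) (e • B₂) ^ 2) =
      fromCols (F₁ * (1 + a ^ 2 • B₁ ^ 2)) (F₂ * (1 + e ^ 2 • B₂ ^ 2)) := by
  have hF₁' : F₁ * (a • B₁) * B₂ = 0 := by
    rw [Matrix.mul_assoc, Matrix.smul_mul, hB, smul_zero, Matrix.mul_zero]
  have hF₂' : F₂ * (e • B₂) * B₁ = 0 := by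
    rw [Matrix.mul_assoc, Matrix.smul_mul, hB', smul_zero, Matrix.mul_zero]
  rw [Matrix.mul_add, Matrix.mul_one, sq, ← Matrix.mul_assoc,
    fromCols_mul_fromBlocks_smul_of_mul_eq_zero hF₁ hF₂,
    fromCols_mul_fromBlocks_smul_of_mul_eq_zero hF₁' hF₂', Matrix.mul_add, Matrix.mul_add,
    Matrix.mul_one, Matrix.mul_one, Matrix.mul_assoc, Matrix.mul_assoc, ← sq, ← sq, smul_pow,
    smul_pow]
  ext _ (_ | _) <;> simp

theorem fromCols_mul_inv_one_add_fromBlocks_smul_sq [DecidableEq n]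
    (hM : IsUnit (1 + fromBlocks (a • B₁) (b • B₂) (c • B₁) (e • B₂) ^ 2))
    (h₁ : IsUnit (1 + a ^ 2 • B₁ ^ 2)) (h₂ : IsUnit (1 + e ^ 2 • B₂ ^ 2)) :
    fromCols B₁ B₂ * (1 + fromBlocks (a • B₁) (b • B₂) (c • B₁) (e • B₂) ^ 2)⁻¹ =
      fromCols (B₁ * (1 + a ^ 2 • B₁ ^ 2)⁻¹) (B₂ * (1 + e ^ 2 • B₂ ^ 2)⁻¹) := by
  rw [isUnit_iff_isUnit_det] at hM h₁ h₂
  have hC₁ : (1 + a ^ 2 • B₁ ^ 2) * B₂ = B₂ := by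
    rw [add_mul, one_mul, smul_mul, sq B₁, mul_assoc, hB, mul_zero, smul_zero, add_zero]
  have hC₂ : (1 + e ^ 2 • B₂ ^ 2) * B₁ = B₁ := by
    rw [add_mul, one_mul, smul_mul, sq B₂, mul_assoc, hB', mul_zero, smul_zero, add_zero]
  have hF₁ : B₁ * (1 + a ^ 2 • B₁ ^ 2)⁻¹ * B₂ = 0 := by
    rw [mul_assoc, ← hC₁, nonsing_inv_mul_cancel_left _ _ h₁, hB]
  have hF₂ : B₂ * (1 + e ^ 2 • B₂ ^ 2)⁻¹ * B₁ = 0 := by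
    rw [mul_assoc, ← hC₂, nonsing_inv_mul_cancel_left _ _ h₂, hB']
  have key : fromCols (B₁ * (1 + a ^ 2 • B₁ ^ 2)⁻¹) (B₂ * (1 + e ^ 2 • B₂ ^ 2)⁻¹) *
      (1 + fromBlocks (a • B₁) (b • B₂) (c • B₁) (e • B₂) ^ 2) = fromCols B₁ B₂ := by
    rw [fromCols_mul_one_add_fromBlocks_smul_sq_of_mul_eq_zero hB hB' hF₁ hF₂,
      nonsing_inv_mul_cancel_right _ _ h₁, nonsing_inv_mul_cancel_right _ _ h₂]
  rw [← key, mul_nonsing_inv_cancel_right _ _ hM]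

end CoupledBlocks

theorem stmt_9_general {d : ℕ} (B₁ B₂ : Matrix (Fin d) (Fin d) ℝ)
    (hB : B₁ * B₂ = 0) (hB' : B₂ * B₁ = 0)
    (k₁ k₂ ℓ₁ ℓ₂ : ℝ)
    (M : Matrix (Fin d ⊕ Fin d) (Fin d ⊕ Fin d) ℝ)
    (hM : M = fromBlocks ((ℓ₁/(2*k₁)) • B₁) ((ℓ₁/(k₁+k₂)) • B₂)
                          ((ℓ₂/(k₁+k₂)) • B₁) ((ℓ₂/(2*k₂)) • B₂))
    (hMu : IsUnit (1 + M ^ 2))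
    (h1 : IsUnit (1 + ((ℓ₁/(2*k₁))^2) • B₁ ^ 2))
    (h2 : IsUnit (1 + ((ℓ₂/(2*k₂))^2) • B₂ ^ 2))
    (V : Matrix (Fin d) (Fin d) ℝ)
    (hV : V = fromCols B₁ B₂ * (1 + M ^ 2)⁻¹ *
              fromRows (ℓ₁ • (1 : Matrix (Fin d) (Fin d) ℝ)) (ℓ₂ • 1)) :
    V = ℓ₁ • (B₁ * (1 + ((ℓ₁/(2*k₁))^2) • B₁ ^ 2)⁻¹) +
        ℓ₂ • (B₂ * (1 + ((ℓ₂/(2*k₂))^2) • B₂ ^ 2)⁻¹) := by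
  subst hM hV
  rw [fromCols_mul_inv_one_add_fromBlocks_smul_sq hB hB' hMu h1 h2]
  -- this product elaborates through the `CStarMatrix` instance, which `rw` does not unfold
  refine (fromCols_mul_fromRows _ _ _ _).trans ?_
  rw [Matrix.mul_smul, Matrix.mul_smul, Matrix.mul_one, Matrix.mul_one]

theorem stmt_9 {d : ℕ} (B₁ B₂ : Matrix (Fin d) (Fin d) ℝ)
    (hB : B₁ * B₂ = 0) (hB' : B₂ * B₁ = 0)
    (k₁ k₂ ℓ₁ ℓ₂ : ℝ) (hk₁ : k₁ ≠ 0) (hk₂ : k₂ ≠ 0) (hk : k₁ + k₂ ≠ 0)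
    (M : Matrix (Fin d ⊕ Fin d) (Fin d ⊕ Fin d) ℝ)
    (hM : M = fromBlocks ((ℓ₁/(2*k₁)) • B₁) ((ℓ₁/(k₁+k₂)) • B₂)
                          ((ℓ₂/(k₁+k₂)) • B₁) ((ℓ₂/(2*k₂)) • B₂))
    (hMu : IsUnit (1 + M ^ 2))
    (h1 : IsUnit (1 + ((ℓ₁/(2*k₁))^2) • B₁ ^ 2))
    (h2 : IsUnit (1 + ((ℓ₂/(2*k₂))^2) • B₂ ^ 2))
    (V : Matrix (Fin d) (Fin d) ℝ)
    (hV : V = fromCols B₁ B₂ * (1 + M ^ 2)⁻¹ *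
              fromRows (ℓ₁ • (1 : Matrix (Fin d) (Fin d) ℝ)) (ℓ₂ • 1)) :
    V = ℓ₁ • (B₁ * (1 + ((ℓ₁/(2*k₁))^2) • B₁ ^ 2)⁻¹) +
        ℓ₂ • (B₂ * (1 + ((ℓ₂/(2*k₂))^2) • B₂ ^ 2)⁻¹) :=
  stmt_9_general B₁ B₂ hB hB' k₁ k₂ ℓ₁ ℓ₂ M hM hMu h1 h2 V hV
end

section
/- Let k ∈ ℂ with k ≠ 0 and Re(k) ≠ 0, B a d×d complex matrix, ℓ ∈ ℂ, and M = [[ℓB/(2k), ℓ·conj(B)/(k+conj(k))],[conj(ℓ)B/(k+conj(k)), conj(ℓ)·conj(B)/(2·conj(k))]]. Assume I₂d + M² is invertible. Then the d×d matrix V = (B conj(B))·(I₂d + M²)⁻¹·col(ℓI_d, conj(ℓ)I_d) is real, i.e. V equals its entrywise complex conjugate. -/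
/-!
Entrywise conjugation acts on each of the three factors of `V` as the block swap
`D = [[0, I], [I, 0]]`, i.e. as reindexing along `Sum.swap`: on `(B conj(B))` from the right,
on `col(ℓ I, conj(ℓ) I)` from the left, and on `M`, hence on `(I + M²)⁻¹`, from both sides.
In the product the inner swaps cancel, so `conj(V) = V`.
-/

open Matrix

namespace Matrix

variable {l m n o K R : Type*}

section Field

variable [Field K]

theorem map_nonsing_inv [Fintype n] [DecidableEq n] {L : Type*} [Field L] (f : K →+* L)
    (A : Matrix n n K) : A⁻¹.map f = (A.map f)⁻¹ := by
  have hdet : f A.det = (A.map f).det := f.map_det A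
  have hadj : A.adjugate.map f = (A.map f).adjugate := f.map_adjugate A
  rw [inv_def, inv_def, ← hdet, ← hadj, Ring.inverse_eq_inv', Ring.inverse_eq_inv',
    ← map_inv₀, map_smul' _ _ _ (map_mul f)]

theorem map_one_add_sq_inv_eq_submatrix [Fintype n] [DecidableEq n] (f : K →+* K) (e : n ≃ n)
    {M : Matrix n n K} (hM : M.map f = M.submatrix e e) :
    (1 + M ^ 2)⁻¹.map f = (1 + M ^ 2)⁻¹.submatrix e e := by
  have hM' : f.mapMatrix M = reindexRingEquiv K e.symm M := hM
  have h : (1 + M ^ 2).map f = (1 + M ^ 2).submatrix e e :=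
    show f.mapMatrix (1 + M ^ 2) = reindexRingEquiv K e.symm (1 + M ^ 2) by
      simp only [map_add, map_one, map_pow, hM']
  rw [map_nonsing_inv, h, inv_submatrix_equiv]

theorem map_mul_mul_eq_self_of_map_eq_submatrix [Fintype n] (f : K →+* K) (e : n ≃ n)
    {X : Matrix l n K} {N : Matrix n n K} {Y : Matrix n o K}
    (hX : X.map f = X.submatrix id e) (hN : N.map f = N.submatrix e e)
    (hY : Y.map f = Y.submatrix e id) : (X * N * Y).map f = X * N * Y := by
  rw [Matrix.map_mul, Matrix.map_mul, hX, hN, hY, submatrix_mul_equiv, submatrix_mul_equiv,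
    submatrix_id_id]

end Field

section StarRing

variable [CommSemiring R] [StarRing R]

theorem fromCols_map_star_eq_submatrix_swap (A : Matrix m n R) :
    (fromCols A (A.map (starRingEnd R))).map (starRingEnd R)
      = (fromCols A (A.map (starRingEnd R))).submatrix id Sum.swap := by
  ext i (j | j) <;> simp

theorem fromRows_map_star_eq_submatrix_swap (A : Matrix m n R) :
    (fromRows A (A.map (starRingEnd R))).map (starRingEnd R)
      = (fromRows A (A.map (starRingEnd R))).submatrix Sum.swap id := by
  ext (i | i) j <;> simp

theorem fromBlocks_smul_map_star_eq_submatrix_swap (a b : R) (A : Matrix m n R) :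
    (fromBlocks (a • A) (b • A.map (starRingEnd R)) (starRingEnd R b • A)
        (starRingEnd R a • A.map (starRingEnd R))).map (starRingEnd R)
      = (fromBlocks (a • A) (b • A.map (starRingEnd R)) (starRingEnd R b • A)
        (starRingEnd R a • A.map (starRingEnd R))).submatrix Sum.swap Sum.swap := by
  ext (i | i) (j | j) <;> simp

end StarRing

end Matrix

theorem stmt_13_general {d : ℕ} (k ℓ : ℂ)
    (B : Matrix (Fin d) (Fin d) ℂ)
    (M : Matrix (Fin d ⊕ Fin d) (Fin d ⊕ Fin d) ℂ)
    (hM : M = fromBlocks ((ℓ/(2*k)) • B)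
                          ((ℓ/(k + (starRingEnd ℂ) k)) • B.map (starRingEnd ℂ))
                          (((starRingEnd ℂ) ℓ/(k + (starRingEnd ℂ) k)) • B)
                          (((starRingEnd ℂ) ℓ/(2 * (starRingEnd ℂ) k)) • B.map (starRingEnd ℂ)))
    (V : Matrix (Fin d) (Fin d) ℂ)
    (hV : V = fromCols B (B.map (starRingEnd ℂ)) * (1 + M ^ 2)⁻¹ *
              fromRows (ℓ • (1 : Matrix (Fin d) (Fin d) ℂ)) ((starRingEnd ℂ) ℓ • 1)) :
    V = V.map (starRingEnd ℂ) := by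
  have hM_swap : M.map (starRingEnd ℂ) = M.submatrix Sum.swap Sum.swap := by
    have hM' : M = fromBlocks ((ℓ / (2 * k)) • B)
        ((ℓ / (k + starRingEnd ℂ k)) • B.map (starRingEnd ℂ))
        (starRingEnd ℂ (ℓ / (k + starRingEnd ℂ k)) • B)
        (starRingEnd ℂ (ℓ / (2 * k)) • B.map (starRingEnd ℂ)) := by
      simp [hM, add_comm, map_ofNat]
    rw [hM', fromBlocks_smul_map_star_eq_submatrix_swap]
  have hL : (starRingEnd ℂ) ℓ • (1 : Matrix (Fin d) (Fin d) ℂ)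
      = (ℓ • (1 : Matrix (Fin d) (Fin d) ℂ)).map (starRingEnd ℂ) := by
    rw [map_smul' _ _ _ (map_mul _), Matrix.map_one _ (map_zero _) (map_one _)]
  rw [hV, hL]
  exact (map_mul_mul_eq_self_of_map_eq_submatrix _ (Equiv.sumComm _ _)
    (fromCols_map_star_eq_submatrix_swap B) (map_one_add_sq_inv_eq_submatrix _ _ hM_swap)
    (fromRows_map_star_eq_submatrix_swap _)).symm

theorem stmt_13 {d : ℕ} (k ℓ : ℂ) (hk : k ≠ 0) (hre : k.re ≠ 0)
    (B : Matrix (Fin d) (Fin d) ℂ)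
    (M : Matrix (Fin d ⊕ Fin d) (Fin d ⊕ Fin d) ℂ)
    (hM : M = fromBlocks ((ℓ/(2*k)) • B)
                          ((ℓ/(k + (starRingEnd ℂ) k)) • B.map (starRingEnd ℂ))
                          (((starRingEnd ℂ) ℓ/(k + (starRingEnd ℂ) k)) • B)
                          (((starRingEnd ℂ) ℓ/(2 * (starRingEnd ℂ) k)) • B.map (starRingEnd ℂ)))
    (hMu : IsUnit (1 + M ^ 2))
    (V : Matrix (Fin d) (Fin d) ℂ)
    (hV : V = fromCols B (B.map (starRingEnd ℂ)) * (1 + M ^ 2)⁻¹ *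
              fromRows (ℓ • (1 : Matrix (Fin d) (Fin d) ℂ)) ((starRingEnd ℂ) ℓ • 1)) :
    V = V.map (starRingEnd ℂ) :=
  stmt_13_general k ℓ B M hM V hV
end

section
/- Let k ≠ 0 be real, B the 2×2 rotation matrix by π/4, and g(x,t) = exp(kx + k³t)/(2k). Then V(x,t) = 2k·g(x,t)·B·(I₂ + (g(x,t)B)²)⁻¹ is a smooth 2×2-matrix-valued function on ℝ² solving the matrix modified KdV equation V_t = V_xxx + 3(V²V_x + V_xV²). -/
open Matrix

noncomputable section

def mkdvD (k y : ℝ) : ℝ := 16*k^4 + y^4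

lemma mkdvD_pos (k y : ℝ) (hk : k ≠ 0) : 0 < mkdvD k y := by
  unfold mkdvD; positivity

lemma mkdv_mono (c co : ℝ) (n : ℕ) (e : ℝ → ℝ) (x : ℝ) (he : HasDerivAt e (c * e x) x) :
    HasDerivAt (fun u => co * e u ^ n) ((n:ℝ) * co * c * e x ^ n) x := by
  have h := (he.fun_pow n).const_mul co
  refine h.congr_deriv (Eq.symm ?_)
  cases n with
  | zero => simp
  | succ m => simp only [Nat.add_sub_cancel]; push_cast; rw [pow_succ]; ring
def mkdvA0 (k y : ℝ) : ℝ := (2*k^2*y^3 + 8*k^4*y) / (mkdvD k y)^1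
def mkdvA1 (k y : ℝ) : ℝ := (-2*k^2*y^7 - 24*k^4*y^5 + 96*k^6*y^3 + 128*k^8*y) / (mkdvD k y)^2
def mkdvA2 (k y : ℝ) : ℝ := (2*k^2*y^11 + 72*k^4*y^9 - 704*k^6*y^7 - 2816*k^8*y^5 + 4608*k^10*y^3 + 2048*k^12*y) / (mkdvD k y)^3
def mkdvA3 (k y : ℝ) : ℝ := (-2*k^2*y^15 - 216*k^4*y^13 + 3872*k^6*y^11 + 30080*k^8*y^9 - 120320*k^10*y^7 - 247808*k^12*y^5 + 221184*k^14*y^3 + 32768*k^16*y) / (mkdvD k y)^4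
def mkdvB0 (k y : ℝ) : ℝ := (-2*k^2*y^3 + 8*k^4*y) / (mkdvD k y)^1
def mkdvB1 (k y : ℝ) : ℝ := (2*k^2*y^7 - 24*k^4*y^5 - 96*k^6*y^3 + 128*k^8*y) / (mkdvD k y)^2
def mkdvB2 (k y : ℝ) : ℝ := (-2*k^2*y^11 + 72*k^4*y^9 + 704*k^6*y^7 - 2816*k^8*y^5 - 4608*k^10*y^3 + 2048*k^12*y) / (mkdvD k y)^3
def mkdvB3 (k y : ℝ) : ℝ := (2*k^2*y^15 - 216*k^4*y^13 - 3872*k^6*y^11 + 30080*k^8*y^9 + 120320*k^10*y^7 - 247808*k^12*y^5 - 221184*k^14*y^3 + 32768*k^16*y) / (mkdvD k y)^4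

lemma mkdv_dA0 (k c : ℝ) (hk : k ≠ 0) (e : ℝ → ℝ) (x : ℝ)
    (he : HasDerivAt e (c * e x) x) :
    HasDerivAt (fun u => mkdvA0 k (e u)) (c * mkdvA1 k (e x)) x := by
  have hD : mkdvD k (e x) ≠ 0 := ne_of_gt (mkdvD_pos k (e x) hk)
  have hnum := ((mkdv_mono c (2*k^2) 3 e x he).fun_add (mkdv_mono c (8*k^4) 1 e x he))
  have hden0 := (mkdv_mono c 1 4 e x he).const_add (16*k^4)
  have hden := hden0.fun_pow 1
  have hdne : (16*k^4 + 1*(e x)^4)^1 ≠ 0 := by positivity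
  have h := hnum.fun_div hden hdne
  have hfg : (fun u => (2*k^2 * (e u) ^ 3 + 8*k^4 * (e u) ^ 1) / (16*k^4 + 1*(e u)^4)^1)
      = fun u => mkdvA0 k (e u) := by
    funext u; simp only [mkdvA0, mkdvD]; ring
  rw [hfg] at h
  refine h.congr_deriv (Eq.symm ?_)
  simp only [mkdvA1, mkdvD]
  field_simp
  ring

lemma mkdv_dA1 (k c : ℝ) (hk : k ≠ 0) (e : ℝ → ℝ) (x : ℝ)
    (he : HasDerivAt e (c * e x) x) :
    HasDerivAt (fun u => mkdvA1 k (e u)) (c * mkdvA2 k (e x)) x := by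
  have hD : mkdvD k (e x) ≠ 0 := ne_of_gt (mkdvD_pos k (e x) hk)
  have hnum := ((((mkdv_mono c (-2*k^2) 7 e x he).fun_add (mkdv_mono c (-24*k^4) 5 e x he)).fun_add (mkdv_mono c (96*k^6) 3 e x he)).fun_add (mkdv_mono c (128*k^8) 1 e x he))
  have hden0 := (mkdv_mono c 1 4 e x he).const_add (16*k^4)
  have hden := hden0.fun_pow 2
  have hdne : (16*k^4 + 1*(e x)^4)^2 ≠ 0 := by positivity
  have h := hnum.fun_div hden hdne
  have hfg : (fun u => (-2*k^2 * (e u) ^ 7 + -24*k^4 * (e u) ^ 5 + 96*k^6 * (e u) ^ 3 + 128*k^8 * (e u) ^ 1) / (16*k^4 + 1*(e u)^4)^2)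
      = fun u => mkdvA1 k (e u) := by
    funext u; simp only [mkdvA1, mkdvD]; ring
  rw [hfg] at h
  refine h.congr_deriv (Eq.symm ?_)
  simp only [mkdvA2, mkdvD]
  field_simp
  ring

lemma mkdv_dA2 (k c : ℝ) (hk : k ≠ 0) (e : ℝ → ℝ) (x : ℝ)
    (he : HasDerivAt e (c * e x) x) :
    HasDerivAt (fun u => mkdvA2 k (e u)) (c * mkdvA3 k (e x)) x := by
  have hD : mkdvD k (e x) ≠ 0 := ne_of_gt (mkdvD_pos k (e x) hk)
  have hnum := ((((((mkdv_mono c (2*k^2) 11 e x he).fun_add (mkdv_mono c (72*k^4) 9 e x he)).fun_add (mkdv_mono c (-704*k^6) 7 e x he)).fun_add (mkdv_mono c (-2816*k^8) 5 e x he)).fun_add (mkdv_mono c (4608*k^10) 3 e x he)).fun_add (mkdv_mono c (2048*k^12) 1 e x he))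
  have hden0 := (mkdv_mono c 1 4 e x he).const_add (16*k^4)
  have hden := hden0.fun_pow 3
  have hdne : (16*k^4 + 1*(e x)^4)^3 ≠ 0 := by positivity
  have h := hnum.fun_div hden hdne
  have hfg : (fun u => (2*k^2 * (e u) ^ 11 + 72*k^4 * (e u) ^ 9 + -704*k^6 * (e u) ^ 7 + -2816*k^8 * (e u) ^ 5 + 4608*k^10 * (e u) ^ 3 + 2048*k^12 * (e u) ^ 1) / (16*k^4 + 1*(e u)^4)^3)
      = fun u => mkdvA2 k (e u) := by
    funext u; simp only [mkdvA2, mkdvD]; ring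
  rw [hfg] at h
  refine h.congr_deriv (Eq.symm ?_)
  simp only [mkdvA3, mkdvD]
  field_simp
  ring

lemma mkdv_dB0 (k c : ℝ) (hk : k ≠ 0) (e : ℝ → ℝ) (x : ℝ)
    (he : HasDerivAt e (c * e x) x) :
    HasDerivAt (fun u => mkdvB0 k (e u)) (c * mkdvB1 k (e x)) x := by
  have hD : mkdvD k (e x) ≠ 0 := ne_of_gt (mkdvD_pos k (e x) hk)
  have hnum := ((mkdv_mono c (-2*k^2) 3 e x he).fun_add (mkdv_mono c (8*k^4) 1 e x he))
  have hden0 := (mkdv_mono c 1 4 e x he).const_add (16*k^4)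
  have hden := hden0.fun_pow 1
  have hdne : (16*k^4 + 1*(e x)^4)^1 ≠ 0 := by positivity
  have h := hnum.fun_div hden hdne
  have hfg : (fun u => (-2*k^2 * (e u) ^ 3 + 8*k^4 * (e u) ^ 1) / (16*k^4 + 1*(e u)^4)^1)
      = fun u => mkdvB0 k (e u) := by
    funext u; simp only [mkdvB0, mkdvD]; ring
  rw [hfg] at h
  refine h.congr_deriv (Eq.symm ?_)
  simp only [mkdvB1, mkdvD]
  field_simp
  ring

lemma mkdv_dB1 (k c : ℝ) (hk : k ≠ 0) (e : ℝ → ℝ) (x : ℝ)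
    (he : HasDerivAt e (c * e x) x) :
    HasDerivAt (fun u => mkdvB1 k (e u)) (c * mkdvB2 k (e x)) x := by
  have hD : mkdvD k (e x) ≠ 0 := ne_of_gt (mkdvD_pos k (e x) hk)
  have hnum := ((((mkdv_mono c (2*k^2) 7 e x he).fun_add (mkdv_mono c (-24*k^4) 5 e x he)).fun_add (mkdv_mono c (-96*k^6) 3 e x he)).fun_add (mkdv_mono c (128*k^8) 1 e x he))
  have hden0 := (mkdv_mono c 1 4 e x he).const_add (16*k^4)
  have hden := hden0.fun_pow 2
  have hdne : (16*k^4 + 1*(e x)^4)^2 ≠ 0 := by positivity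
  have h := hnum.fun_div hden hdne
  have hfg : (fun u => (2*k^2 * (e u) ^ 7 + -24*k^4 * (e u) ^ 5 + -96*k^6 * (e u) ^ 3 + 128*k^8 * (e u) ^ 1) / (16*k^4 + 1*(e u)^4)^2)
      = fun u => mkdvB1 k (e u) := by
    funext u; simp only [mkdvB1, mkdvD]; ring
  rw [hfg] at h
  refine h.congr_deriv (Eq.symm ?_)
  simp only [mkdvB2, mkdvD]
  field_simp
  ring

lemma mkdv_dB2 (k c : ℝ) (hk : k ≠ 0) (e : ℝ → ℝ) (x : ℝ)
    (he : HasDerivAt e (c * e x) x) :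
    HasDerivAt (fun u => mkdvB2 k (e u)) (c * mkdvB3 k (e x)) x := by
  have hD : mkdvD k (e x) ≠ 0 := ne_of_gt (mkdvD_pos k (e x) hk)
  have hnum := ((((((mkdv_mono c (-2*k^2) 11 e x he).fun_add (mkdv_mono c (72*k^4) 9 e x he)).fun_add (mkdv_mono c (704*k^6) 7 e x he)).fun_add (mkdv_mono c (-2816*k^8) 5 e x he)).fun_add (mkdv_mono c (-4608*k^10) 3 e x he)).fun_add (mkdv_mono c (2048*k^12) 1 e x he))
  have hden0 := (mkdv_mono c 1 4 e x he).const_add (16*k^4)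
  have hden := hden0.fun_pow 3
  have hdne : (16*k^4 + 1*(e x)^4)^3 ≠ 0 := by positivity
  have h := hnum.fun_div hden hdne
  have hfg : (fun u => (-2*k^2 * (e u) ^ 11 + 72*k^4 * (e u) ^ 9 + 704*k^6 * (e u) ^ 7 + -2816*k^8 * (e u) ^ 5 + -4608*k^10 * (e u) ^ 3 + 2048*k^12 * (e u) ^ 1) / (16*k^4 + 1*(e u)^4)^3)
      = fun u => mkdvB2 k (e u) := by
    funext u; simp only [mkdvB2, mkdvD]; ring
  rw [hfg] at h
  refine h.congr_deriv (Eq.symm ?_)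
  simp only [mkdvB3, mkdvD]
  field_simp
  ring


lemma mkdv_pde_a (k y : ℝ) (hk : k ≠ 0) :
    k^2 * mkdvA1 k y = k^2 * mkdvA3 k y +
      12*((mkdvA0 k y^2 - mkdvB0 k y^2)*mkdvA1 k y - 2*mkdvA0 k y*mkdvB0 k y*mkdvB1 k y) := by
  have hD : (16*k^4 + y^4) ≠ 0 := by positivity
  simp only [mkdvA0, mkdvA1, mkdvA3, mkdvB0, mkdvB1, mkdvD]
  field_simp
  ring

lemma mkdv_pde_b (k y : ℝ) (hk : k ≠ 0) :
    k^2 * mkdvB1 k y = k^2 * mkdvB3 k y +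
      12*((mkdvA0 k y^2 - mkdvB0 k y^2)*mkdvB1 k y + 2*mkdvA0 k y*mkdvB0 k y*mkdvA1 k y) := by
  have hD : (16*k^4 + y^4) ≠ 0 := by positivity
  simp only [mkdvA0, mkdvB1, mkdvB3, mkdvB0, mkdvA1, mkdvD]
  field_simp
  ring

def mkdvW (k x t : ℝ) : Matrix (Fin 2) (Fin 2) ℝ :=
  !![mkdvA0 k (Real.exp (k*x + k^3*t)), mkdvB0 k (Real.exp (k*x + k^3*t));
     -mkdvB0 k (Real.exp (k*x + k^3*t)), mkdvA0 k (Real.exp (k*x + k^3*t))]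

lemma mkdv_VW (k : ℝ) (hk : k ≠ 0) (x t : ℝ) :
    (2 * k * (Real.exp (k * x + k ^ 3 * t) / (2 * k))) •
      ((!![1/Real.sqrt 2, 1/Real.sqrt 2; -(1/Real.sqrt 2), 1/Real.sqrt 2] : Matrix (Fin 2) (Fin 2) ℝ) *
       (1 + ((Real.exp (k * x + k ^ 3 * t) / (2 * k)) •
          (!![1/Real.sqrt 2, 1/Real.sqrt 2; -(1/Real.sqrt 2), 1/Real.sqrt 2] : Matrix (Fin 2) (Fin 2) ℝ)) ^ 2)⁻¹)
    = Real.sqrt 2 • mkdvW k x t := by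
  have hs2 : Real.sqrt 2 ^ 2 = 2 := Real.sq_sqrt (by norm_num)
  have hs0 : Real.sqrt 2 ≠ 0 := by positivity
  set s := Real.sqrt 2 with hsdef
  set e := Real.exp (k * x + k ^ 3 * t) with hedef
  have hep : 0 < e := Real.exp_pos _
  set G : ℝ := e / (2*k) with hGdef
  have hBm : (!![1/s, 1/s; -(1/s), 1/s] : Matrix (Fin 2) (Fin 2) ℝ)
      = (s/2) • !![(1:ℝ), 1; -1, 1] := by
    ext i j
    fin_cases i <;> fin_cases j <;>
      simp [Matrix.smul_apply] <;> field_simp <;> linarith [hs2]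
  have hC2 : (!![(1:ℝ),1;-1,1] : Matrix (Fin 2) (Fin 2) ℝ)^2 = !![0,2;-2,0] := by
    norm_num [pow_two, Matrix.mul_fin_two]
  have hhalf : (G * (s/2))^2 = G^2/2 := by
    have h12 : (s/2)^2 = 1/2 := by rw [div_pow, hs2]; norm_num
    rw [mul_pow, h12]; ring
  have hsq : (G • ((s/2) • (!![(1:ℝ),1;-1,1] : Matrix (Fin 2) (Fin 2) ℝ)))^2
      = (G^2/2) • !![(0:ℝ),2;-2,0] := by
    rw [smul_smul, smul_pow, hC2, hhalf]
  have hM : (1 : Matrix (Fin 2) (Fin 2) ℝ) + (G^2/2) • !![(0:ℝ),2;-2,0]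
      = !![1, G^2; -(G^2), 1] := by
    ext i j
    fin_cases i <;> fin_cases j <;> simp [Matrix.one_apply]
  have hG4 : (1:ℝ) + G^4 ≠ 0 := by positivity
  have hMinv : (!![(1:ℝ), G^2; -(G^2), 1] : Matrix (Fin 2) (Fin 2) ℝ)⁻¹
      = (1/(1+G^4)) • !![(1:ℝ), -(G^2); G^2, 1] := by
    apply inv_eq_right_inv
    ext i j
    fin_cases i <;> fin_cases j <;>
      simp [Matrix.mul_apply, Fin.sum_univ_two, Matrix.one_apply] <;>
      field_simp <;> ring
  rw [hBm, hsq, hM, hMinv, Matrix.smul_mul, Matrix.mul_smul, smul_smul, smul_smul]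
  have hDne : mkdvD k e ≠ 0 := ne_of_gt (mkdvD_pos k e hk)
  ext i j
  fin_cases i <;> fin_cases j <;>
    · simp only [mkdvW, Matrix.smul_apply, Matrix.mul_apply, Fin.sum_univ_two,
        Matrix.cons_val', Matrix.cons_val_zero, Matrix.cons_val_one, Matrix.head_cons,
        Matrix.head_fin_const, Matrix.empty_val', Matrix.cons_val_fin_one,
        mkdvA0, mkdvB0, mkdvD, hGdef, smul_eq_mul, Fin.zero_eta, Fin.mk_one, Fin.isValue,
          Matrix.of_apply, ← hedef]
      rw [mkdvD] at hDne
      field_simp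
      ring

end

theorem stmt_16 (k : ℝ) (hk : k ≠ 0)
    (B : Matrix (Fin 2) (Fin 2) ℝ)
    (hB : B = !![1/Real.sqrt 2, 1/Real.sqrt 2; -(1/Real.sqrt 2), 1/Real.sqrt 2])
    (g : ℝ → ℝ → ℝ)
    (hg : ∀ x t, g x t = Real.exp (k * x + k ^ 3 * t) / (2 * k))
    (V : ℝ → ℝ → Matrix (Fin 2) (Fin 2) ℝ)
    (hV : ∀ x t, V x t = (2 * k * g x t) • (B * (1 + (g x t • B) ^ 2)⁻¹)) :
    (∀ i j : Fin 2, ContDiff ℝ (⊤ : ℕ∞) (fun p : ℝ × ℝ => V p.1 p.2 i j)) ∧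
    (∀ x t : ℝ,
      (Matrix.of fun i j => deriv (fun t' => V x t' i j) t) =
        (Matrix.of fun i j => iteratedDeriv 3 (fun x' => V x' t i j) x) +
          (3 : ℝ) •
            ((V x t) ^ 2 * (Matrix.of fun i j => deriv (fun x' => V x' t i j) x) +
              (Matrix.of fun i j => deriv (fun x' => V x' t i j) x) * (V x t) ^ 2)) := by
  have hVW : ∀ x t, V x t = Real.sqrt 2 • mkdvW k x t := by
    intro x t
    rw [hV, hg, hB]
    exact mkdv_VW k hk x t
  -- exponential facts
  have hEdx : ∀ t x : ℝ, HasDerivAt (fun u => Real.exp (k*u + k^3*t))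
      (k * Real.exp (k*x + k^3*t)) x := by
    intro t x
    have hlin : HasDerivAt (fun u : ℝ => k*u + k^3*t) k x := by
      simpa using ((hasDerivAt_id x).const_mul k).add_const (k^3*t)
    simpa [mul_comm] using hlin.exp
  have hEdt : ∀ x t : ℝ, HasDerivAt (fun u => Real.exp (k*x + k^3*u))
      (k^3 * Real.exp (k*x + k^3*t)) t := by
    intro x t
    have hlin : HasDerivAt (fun u : ℝ => k*x + k^3*u) (k^3) t := by
      simpa using (((hasDerivAt_id t).const_mul (k^3)).const_add (k*x))
    simpa [mul_comm] using hlin.exp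
  constructor
  · -- smoothness
    have hE : ContDiff ℝ (⊤ : ℕ∞) (fun p : ℝ × ℝ => Real.exp (k*p.1 + k^3*p.2)) := by
      apply Real.contDiff_exp.comp
      exact (contDiff_fst.const_smul k).add (contDiff_snd.const_smul (k^3))
    have hden : ContDiff ℝ (⊤ : ℕ∞) (fun p : ℝ × ℝ => mkdvD k (Real.exp (k*p.1 + k^3*p.2))) := by
      simp only [mkdvD]
      exact contDiff_const.add (hE.pow 4)
    have hdenne : ∀ p : ℝ × ℝ, mkdvD k (Real.exp (k*p.1 + k^3*p.2)) ≠ 0 :=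
      fun p => ne_of_gt (mkdvD_pos k _ hk)
    have hA : ContDiff ℝ (⊤ : ℕ∞) (fun p : ℝ × ℝ => mkdvA0 k (Real.exp (k*p.1 + k^3*p.2))) := by
      simp only [mkdvA0]
      exact ((contDiff_const.mul (hE.pow 3)).add (contDiff_const.mul hE)).div (hden.pow 1)
        (fun p => pow_ne_zero _ (hdenne p))
    have hBc : ContDiff ℝ (⊤ : ℕ∞) (fun p : ℝ × ℝ => mkdvB0 k (Real.exp (k*p.1 + k^3*p.2))) := by
      simp only [mkdvB0]
      exact ((contDiff_const.mul (hE.pow 3)).add (contDiff_const.mul hE)).div (hden.pow 1)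
        (fun p => pow_ne_zero _ (hdenne p))
    intro i j
    fin_cases i <;> fin_cases j <;>
      simp [hVW, mkdvW, mul_neg]
    · exact contDiff_const.mul hA
    · exact contDiff_const.mul hBc
    · exact (contDiff_const.mul hBc).neg
    · exact contDiff_const.mul hA
  · -- the PDE
    intro x t
    set s := Real.sqrt 2 with hsdef
    have hs2 : s ^ 2 = 2 := Real.sq_sqrt (by norm_num)
    set E : ℝ := Real.exp (k*x + k^3*t) with hEdef
    -- entry functions in x
    have hfA : (fun x' => V x' t 0 0) = fun x' => s * mkdvA0 k (Real.exp (k*x' + k^3*t)) := by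
      funext u; simp [hVW, mkdvW]
    have hfB : (fun x' => V x' t 0 1) = fun x' => s * mkdvB0 k (Real.exp (k*x' + k^3*t)) := by
      funext u; simp [hVW, mkdvW]
    have hfB' : (fun x' => V x' t 1 0) = fun x' => -(s * mkdvB0 k (Real.exp (k*x' + k^3*t))) := by
      funext u; simp [hVW, mkdvW, mul_neg]
    have hfA' : (fun x' => V x' t 1 1) = fun x' => s * mkdvA0 k (Real.exp (k*x' + k^3*t)) := by
      funext u; simp [hVW, mkdvW]
    -- x-derivative chains
    have dA0 : ∀ u, HasDerivAt (fun x' => s * mkdvA0 k (Real.exp (k*x' + k^3*t)))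
        (s * (k * mkdvA1 k (Real.exp (k*u + k^3*t)))) u :=
      fun u => (mkdv_dA0 k k hk _ u (hEdx t u)).const_mul s
    have dA1 : ∀ u, HasDerivAt (fun x' => s * (k * mkdvA1 k (Real.exp (k*x' + k^3*t))))
        (s * (k * (k * mkdvA2 k (Real.exp (k*u + k^3*t))))) u :=
      fun u => ((mkdv_dA1 k k hk _ u (hEdx t u)).const_mul k).const_mul s
    have dA2 : ∀ u, HasDerivAt (fun x' => s * (k * (k * mkdvA2 k (Real.exp (k*x' + k^3*t)))))
        (s * (k * (k * (k * mkdvA3 k (Real.exp (k*u + k^3*t)))))) u :=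
      fun u => (((mkdv_dA2 k k hk _ u (hEdx t u)).const_mul k).const_mul k).const_mul s
    have dB0 : ∀ u, HasDerivAt (fun x' => s * mkdvB0 k (Real.exp (k*x' + k^3*t)))
        (s * (k * mkdvB1 k (Real.exp (k*u + k^3*t)))) u :=
      fun u => (mkdv_dB0 k k hk _ u (hEdx t u)).const_mul s
    have dB1 : ∀ u, HasDerivAt (fun x' => s * (k * mkdvB1 k (Real.exp (k*x' + k^3*t))))
        (s * (k * (k * mkdvB2 k (Real.exp (k*u + k^3*t))))) u :=
      fun u => ((mkdv_dB1 k k hk _ u (hEdx t u)).const_mul k).const_mul s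
    have dB2 : ∀ u, HasDerivAt (fun x' => s * (k * (k * mkdvB2 k (Real.exp (k*x' + k^3*t)))))
        (s * (k * (k * (k * mkdvB3 k (Real.exp (k*u + k^3*t)))))) u :=
      fun u => (((mkdv_dB2 k k hk _ u (hEdx t u)).const_mul k).const_mul k).const_mul s
    -- first x-derivative matrix
    have hdX : (Matrix.of fun i j => deriv (fun x' => V x' t i j) x) =
        !![s * (k * mkdvA1 k E), s * (k * mkdvB1 k E);
           -(s * (k * mkdvB1 k E)), s * (k * mkdvA1 k E)] := by
      ext i j
      fin_cases i <;> fin_cases j <;> simp only [Fin.mk_zero, Fin.mk_one, Fin.isValue, Matrix.of_apply, Matrix.cons_val',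
        Matrix.cons_val_zero, Matrix.cons_val_one, Matrix.head_cons, Matrix.head_fin_const,
        Matrix.empty_val', Matrix.cons_val_fin_one]
      · rw [hfA]; exact (dA0 x).deriv
      · rw [hfB]; exact (dB0 x).deriv
      · rw [hfB']; exact ((dB0 x).neg).deriv
      · rw [hfA']; exact (dA0 x).deriv
    -- third x-derivative matrix
    have h3A : iteratedDeriv 3 (fun x' => s * mkdvA0 k (Real.exp (k*x' + k^3*t))) x
        = s * (k * (k * (k * mkdvA3 k E))) := by
      rw [show (3:ℕ) = 2 + 1 from rfl, iteratedDeriv_succ, iteratedDeriv_succ,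
        iteratedDeriv_one]
      rw [funext fun u => (dA0 u).deriv, funext fun u => (dA1 u).deriv]
      exact (dA2 x).deriv
    have h3B : iteratedDeriv 3 (fun x' => s * mkdvB0 k (Real.exp (k*x' + k^3*t))) x
        = s * (k * (k * (k * mkdvB3 k E))) := by
      rw [show (3:ℕ) = 2 + 1 from rfl, iteratedDeriv_succ, iteratedDeriv_succ,
        iteratedDeriv_one]
      rw [funext fun u => (dB0 u).deriv, funext fun u => (dB1 u).deriv]
      exact (dB2 x).deriv
    have hd3 : (Matrix.of fun i j => iteratedDeriv 3 (fun x' => V x' t i j) x) =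
        !![s * (k * (k * (k * mkdvA3 k E))), s * (k * (k * (k * mkdvB3 k E)));
           -(s * (k * (k * (k * mkdvB3 k E)))), s * (k * (k * (k * mkdvA3 k E)))] := by
      ext i j
      fin_cases i <;> fin_cases j <;> simp only [Fin.mk_zero, Fin.mk_one, Fin.isValue, Matrix.of_apply, Matrix.cons_val',
        Matrix.cons_val_zero, Matrix.cons_val_one, Matrix.head_cons, Matrix.head_fin_const,
        Matrix.empty_val', Matrix.cons_val_fin_one]
      · rw [hfA]; exact h3A
      · rw [hfB]; exact h3B
      · rw [hfB', iteratedDeriv_fun_neg, h3B]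
      · rw [hfA']; exact h3A
    -- t-derivative matrix
    have hdT : (Matrix.of fun i j => deriv (fun t' => V x t' i j) t) =
        !![s * (k^3 * mkdvA1 k E), s * (k^3 * mkdvB1 k E);
           -(s * (k^3 * mkdvB1 k E)), s * (k^3 * mkdvA1 k E)] := by
      have gA : (fun t' => V x t' 0 0) = fun t' => s * mkdvA0 k (Real.exp (k*x + k^3*t')) := by
        funext u; simp [hVW, mkdvW]
      have gB : (fun t' => V x t' 0 1) = fun t' => s * mkdvB0 k (Real.exp (k*x + k^3*t')) := by
        funext u; simp [hVW, mkdvW]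
      have gB' : (fun t' => V x t' 1 0) = fun t' => -(s * mkdvB0 k (Real.exp (k*x + k^3*t'))) := by
        funext u; simp [hVW, mkdvW, mul_neg]
      have gA' : (fun t' => V x t' 1 1) = fun t' => s * mkdvA0 k (Real.exp (k*x + k^3*t')) := by
        funext u; simp [hVW, mkdvW]
      have tA : HasDerivAt (fun t' => s * mkdvA0 k (Real.exp (k*x + k^3*t')))
          (s * (k^3 * mkdvA1 k E)) t :=
        (mkdv_dA0 k (k^3) hk _ t (hEdt x t)).const_mul s
      have tB : HasDerivAt (fun t' => s * mkdvB0 k (Real.exp (k*x + k^3*t')))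
          (s * (k^3 * mkdvB1 k E)) t :=
        (mkdv_dB0 k (k^3) hk _ t (hEdt x t)).const_mul s
      ext i j
      fin_cases i <;> fin_cases j <;> simp only [Fin.mk_zero, Fin.mk_one, Fin.isValue, Matrix.of_apply, Matrix.cons_val',
        Matrix.cons_val_zero, Matrix.cons_val_one, Matrix.head_cons, Matrix.head_fin_const,
        Matrix.empty_val', Matrix.cons_val_fin_one]
      · rw [gA]; exact tA.deriv
      · rw [gB]; exact tB.deriv
      · rw [gB']; exact tB.neg.deriv
      · rw [gA']; exact tA.deriv
    -- square of V
    have hV2 : (V x t)^2 =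
        !![2*(mkdvA0 k E^2 - mkdvB0 k E^2), 4*(mkdvA0 k E * mkdvB0 k E);
           -(4*(mkdvA0 k E * mkdvB0 k E)), 2*(mkdvA0 k E^2 - mkdvB0 k E^2)] := by
      rw [hVW, smul_pow, hs2]
      ext i j
      fin_cases i <;> fin_cases j <;>
        simp [mkdvW, pow_two, Matrix.mul_apply, Fin.sum_univ_two, Matrix.smul_apply,
          ← hEdef] <;> ring
    rw [hdT, hd3, hdX, hV2]
    have pa := mkdv_pde_a k E hk
    have pb := mkdv_pde_b k E hk
    ext i j
    fin_cases i <;> fin_cases j <;>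
      simp [Matrix.mul_apply, Fin.sum_univ_two, Matrix.add_apply, Matrix.smul_apply,
        smul_eq_mul]
    · linear_combination (s * k) * pa
    · linear_combination (s * k) * pb
    · linear_combination (-(s * k)) * pb
    · linear_combination (s * k) * pa
end
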